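/- The safe-announcement update coincides with a public announcement of safety: for all epistemic models M, states s, and formulas φ, ψ: M,s ⊨ [φ⟡!]ψ if and only if (M,s ⊨ ▲φ implies M^{▲φ!},s ⊨ ψ), where M^{▲φ!} is the public-announcement restriction of M to the states satisfying ▲φ. Moreover, the updated model M^{φ⟡!} from (s,a) is bisimilar to M^{▲φ!} from s via the relation Z with (t,b) Z t. -/

import Mathlib

/-- An epistemic (Kripke) model over agent set `Agt` and state set `St`. -/
structure Model (Agt : Type) (St : Type) where
  rel : Agt → St → St → Prop
  val : ℕ → St → Prop

/-- The model is an epistemic model proper: each agent's relation is an equivalence. -/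
def isEquivModel {Agt St : Type} (M : Model Agt St) : Prop :=
  ∀ a, Equivalence (M.rel a)

/-- Formulas: atoms, ⊥, →, ∧, K_a, ▲ (safety), [φ⟡]ψ (pseudo-anonymous announcement),
    [φ⟡!]ψ (safe/intentional anonymous announcement). -/
inductive Form (Agt : Type) : Type where
  | atom : ℕ → Form Agt
  | bot  : Form Agt
  | imp  : Form Agt → Form Agt → Form Agt
  | and  : Form Agt → Form Agt → Form Agt
  | K    : Agt → Form Agt → Form Agt
  | tri  : Form Agt → Form Agt
  | annA : Form Agt → Form Agt → Form Agt
  | annS : Form Agt → Form Agt → Form Agt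

def Form.neg {Agt : Type} (φ : Form Agt) : Form Agt := .imp φ .bot

/-- One step of the safety operator: `⋁_{G ∈ N³} E_G (P ∧ X)`. -/
def fsafe {Agt St : Type} (M : Model Agt St) (P X : St → Prop) (s : St) : Prop :=
  ∃ G : Finset Agt, G.card = 3 ∧ ∀ a ∈ G, ∀ t, M.rel a s t → P t ∧ X t

/-- `▲P` semantically: greatest fixpoint of `fsafe M P`, i.e. union of post-fixed points. -/
def triSem {Agt St : Type} (M : Model Agt St) (P : St → Prop) (s : St) : Prop :=
  ∃ X : St → Prop, X s ∧ ∀ t, X t → fsafe M P X t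

/-- Product update of `M` with an action model whose events are `E`, relation `arel`, and
    (semantic) preconditions `pre`.  States not satisfying the precondition are cut off
    from the relation (this encodes the restriction to legal states). -/
def prodUpd {Agt St E : Type} (M : Model Agt St) (arel : Agt → E → E → Prop)
    (pre : E → St → Prop) : Model Agt (St × E) where
  rel c p q := pre p.2 p.1 ∧ pre q.2 q.1 ∧ M.rel c p.1 q.1 ∧ arel c p.2 q.2
  val n p := M.val n p.1

/-- Action relation of the pseudo-anonymous action model: `a ∼_c b` iff `(a = c ↔ b = c)`. -/
def anonRel {Agt : Type} (c a b : Agt) : Prop := (a = c ↔ b = c)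

/-- The pseudo-anonymous style update `M^{φ⟡}` (with precondition `pre a`). -/
def updA {Agt St : Type} (M : Model Agt St) (pre : Agt → St → Prop) : Model Agt (St × Agt) :=
  prodUpd M anonRel pre

/-- Satisfaction. -/
def Sat {Agt : Type} : {St : Type} → Model Agt St → St → Form Agt → Prop
  | _, M, s, .atom n => M.val n s
  | _, _, _, .bot => False
  | _, M, s, .imp φ ψ => Sat M s φ → Sat M s ψ
  | _, M, s, .and φ ψ => Sat M s φ ∧ Sat M s ψ
  | _, M, s, .K a φ => ∀ t, M.rel a s t → Sat M t φ
  | _, M, s, .tri φ => triSem M (fun t => Sat M t φ) s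
  | _, M, s, .annA φ ψ => ∀ a, (∀ t, M.rel a s t → Sat M t φ) →
      Sat (updA M (fun b t => ∀ u, M.rel b t u → Sat M u φ)) (s, a) ψ
  | _, M, s, .annS φ ψ => ∀ a, (∀ t, M.rel a s t → triSem M (fun u => Sat M u φ) t) →
      Sat (updA M (fun b t => ∀ u, M.rel b t u → triSem M (fun v => Sat M v φ) u)) (s, a) ψ

/-- The pseudo-anonymous update `M^{φ⟡}`. -/
def updAnn {Agt St : Type} (M : Model Agt St) (φ : Form Agt) : Model Agt (St × Agt) :=
  updA M (fun b t => ∀ u, M.rel b t u → Sat M u φ)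

/-- The safe (intentional) anonymous update `M^{φ⟡!}`. -/
def updSafe {Agt St : Type} (M : Model Agt St) (φ : Form Agt) : Model Agt (St × Agt) :=
  updA M (fun b t => ∀ u, M.rel b t u → triSem M (fun v => Sat M v φ) u)

/-- Public announcement update: restriction of `M` to `P` (encoded by cutting the relation). -/
def restrict {Agt St : Type} (M : Model Agt St) (P : St → Prop) : Model Agt St where
  rel a x y := P x ∧ P y ∧ M.rel a x y
  val := M.val

/-- Iterative approximations `▲_n`. -/
def triN {Agt St : Type} (M : Model Agt St) (P : St → Prop) : ℕ → St → Prop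
  | 0 => P
  | n + 1 => fun s => P s ∧ ∃ G : Finset Agt, G.card = 3 ∧
      ∀ a ∈ G, ∀ t, M.rel a s t → triN M P n t

/-- Standard bisimulation between two models. -/
structure Bisim {Agt St₁ St₂ : Type} (M₁ : Model Agt St₁) (M₂ : Model Agt St₂)
    (Z : St₁ → St₂ → Prop) : Prop where
  atoms : ∀ s t, Z s t → ∀ n, (M₁.val n s ↔ M₂.val n t)
  forth : ∀ s t, Z s t → ∀ a u, M₁.rel a s u → ∃ v, M₂.rel a t v ∧ Z u v
  back  : ∀ s t, Z s t → ∀ a v, M₂.rel a t v → ∃ u, M₁.rel a s u ∧ Z u v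

/-- `f` is a group assignment function for `M`. -/
def GroupAssign {Agt St : Type} (M : Model Agt St) (f : St → Finset Agt) : Prop :=
  (∀ t, f t = ∅ ∨ (f t).card = 3) ∧
  (∀ t t' i, i ∈ f t → M.rel i t t' → f t' ≠ ∅)

/-- `σ : Fin (m+1) → St` is an `f`-consistent path. -/
def FPath {Agt St : Type} (M : Model Agt St) (f : St → Finset Agt) (m : ℕ)
    (σ : Fin (m + 1) → St) : Prop :=
  ∀ k : Fin m, ∃ a ∈ f (σ k.castSucc), M.rel a (σ k.castSucc) (σ k.succ)

/-! The relation linking a legal state `(t, b)` of `M^{φ⟡!}` to `t` is a bisimulation onto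
`M^{▲φ!}`. Forth is immediate, since a legal `(t, b)` has `K_b ▲φ` and hence `▲φ` at `t`.
For back, let `t ∼_c v` in the restriction. If `b = c`, then `(v, c)` is legal by transitivity
of `∼_c`. Otherwise `▲φ` at `v` supplies three agents who know `▲φ` at `v`; one of them,
`b' ≠ c`, makes `(v, b')` legal and `c`-indistinguishable from `(t, b)`. Truth is invariant
under bisimulation, and `▲φ` at `s` gives some agent who knows `▲φ` at `s`, so
`[φ⟡!]ψ` is the public announcement of `▲φ`. -/

section Bisimulation

variable {Agt St₁ St₂ : Type} {M₁ : Model Agt St₁} {M₂ : Model Agt St₂}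
  {Z : St₁ → St₂ → Prop}

theorem Bisim.symm (h : Bisim M₁ M₂ Z) : Bisim M₂ M₁ (fun t s => Z s t) where
  atoms t s hZ n := (h.atoms s t hZ n).symm
  forth t s hZ a v hv := h.back s t hZ a v hv
  back t s hZ a u hu := h.forth s t hZ a u hu

theorem Bisim.forall_rel_iff (h : Bisim M₁ M₂ Z) {P₁ : St₁ → Prop} {P₂ : St₂ → Prop}
    (hP : ∀ u v, Z u v → (P₁ u ↔ P₂ v)) (b : Agt) {s : St₁} {t : St₂} (hst : Z s t) :
    (∀ u, M₁.rel b s u → P₁ u) ↔ (∀ v, M₂.rel b t v → P₂ v) := by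
  constructor
  · intro hs v hv
    obtain ⟨u, hu, hZ⟩ := h.back s t hst b v hv
    exact (hP u v hZ).mp (hs u hu)
  · intro ht u hu
    obtain ⟨v, hv, hZ⟩ := h.forth s t hst b u hu
    exact (hP u v hZ).mpr (ht v hv)

theorem Bisim.triSem_of_triSem (h : Bisim M₁ M₂ Z) {P₁ : St₁ → Prop} {P₂ : St₂ → Prop}
    (hP : ∀ u v, Z u v → P₁ u → P₂ v) {s : St₁} {t : St₂} (hst : Z s t) :
    triSem M₁ P₁ s → triSem M₂ P₂ t := by
  rintro ⟨X, hXs, hX⟩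
  refine ⟨fun v => ∃ u, Z u v ∧ X u, ⟨s, hst, hXs⟩, ?_⟩
  rintro v ⟨u, hZ, hXu⟩
  obtain ⟨G, hG, hGX⟩ := hX u hXu
  refine ⟨G, hG, fun a ha v' hv' => ?_⟩
  obtain ⟨u', hu', hZ'⟩ := h.back u v hZ a v' hv'
  obtain ⟨hP₁, hX'⟩ := hGX a ha u' hu'
  exact ⟨hP _ _ hZ' hP₁, u', hZ', hX'⟩

theorem Bisim.triSem_iff (h : Bisim M₁ M₂ Z) {P₁ : St₁ → Prop} {P₂ : St₂ → Prop}
    (hP : ∀ u v, Z u v → (P₁ u ↔ P₂ v)) {s : St₁} {t : St₂} (hst : Z s t) :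
    triSem M₁ P₁ s ↔ triSem M₂ P₂ t :=
  ⟨h.triSem_of_triSem (fun u v hZ => (hP u v hZ).mp) hst,
    h.symm.triSem_of_triSem (fun v u hZ => (hP u v hZ).mpr) hst⟩

theorem Bisim.updA (h : Bisim M₁ M₂ Z) {pre₁ : Agt → St₁ → Prop} {pre₂ : Agt → St₂ → Prop}
    (hpre : ∀ b s t, Z s t → (pre₁ b s ↔ pre₂ b t)) :
    Bisim (updA M₁ pre₁) (updA M₂ pre₂) (fun p q => Z p.1 q.1 ∧ p.2 = q.2) where
  atoms p q hZ n := h.atoms p.1 q.1 hZ.1 n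
  forth p q hZ c u hu := by
    obtain ⟨hp, hu₂, hrel, hanon⟩ := hu
    obtain ⟨v, hv, hZ'⟩ := h.forth p.1 q.1 hZ.1 c u.1 hrel
    rw [hZ.2] at hp hanon
    exact ⟨(v, u.2), ⟨(hpre _ _ _ hZ.1).mp hp, (hpre _ _ _ hZ').mp hu₂, hv, hanon⟩, hZ', rfl⟩
  back p q hZ c v hv := by
    obtain ⟨hq, hv₂, hrel, hanon⟩ := hv
    obtain ⟨u, hu, hZ'⟩ := h.back p.1 q.1 hZ.1 c v.1 hrel
    rw [← hZ.2] at hq hanon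
    exact ⟨(u, v.2), ⟨(hpre _ _ _ hZ.1).mpr hq, (hpre _ _ _ hZ').mpr hv₂, hu, hanon⟩, hZ', rfl⟩

end Bisimulation

theorem sat_iff_of_bisim {Agt : Type} (φ : Form Agt) {St₁ St₂ : Type} {M₁ : Model Agt St₁}
    {M₂ : Model Agt St₂} {Z : St₁ → St₂ → Prop} (h : Bisim M₁ M₂ Z) {s : St₁} {t : St₂}
    (hst : Z s t) : Sat M₁ s φ ↔ Sat M₂ t φ := by
  induction φ generalizing St₁ St₂ with
  | atom n => exact h.atoms s t hst n
  | bot => exact Iff.rfl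
  | imp φ ψ ihφ ihψ => exact imp_congr (ihφ h hst) (ihψ h hst)
  | and φ ψ ihφ ihψ => exact and_congr (ihφ h hst) (ihψ h hst)
  | K a φ ih => exact h.forall_rel_iff (fun u v hZ => ih h hZ) a hst
  | tri φ ih => exact h.triSem_iff (fun u v hZ => ih h hZ) hst
  | annA φ ψ ihφ ihψ =>
    have hpre := fun b (u : St₁) (v : St₂) (hZ : Z u v) =>
      h.forall_rel_iff (fun u v hZ' => ihφ h hZ') b hZ
    exact forall_congr' fun a =>
      imp_congr (hpre a s t hst) (ihψ (h.updA hpre) (s := (s, a)) (t := (t, a)) ⟨hst, rfl⟩)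
  | annS φ ψ ihφ ihψ =>
    have htri := fun (u : St₁) (v : St₂) (hZ : Z u v) =>
      h.triSem_iff (fun u v hZ' => ihφ h hZ') hZ
    have hpre := fun b (u : St₁) (v : St₂) (hZ : Z u v) => h.forall_rel_iff htri b hZ
    exact forall_congr' fun a =>
      imp_congr (hpre a s t hst) (ihψ (h.updA hpre) (s := (s, a)) (t := (t, a)) ⟨hst, rfl⟩)

namespace triSem

variable {Agt St : Type} {M : Model Agt St} {P : St → Prop} {s : St}

theorem exists_group_knows (h : triSem M P s) :
    ∃ G : Finset Agt, G.card = 3 ∧ ∀ a ∈ G, ∀ t, M.rel a s t → triSem M P t := by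
  obtain ⟨X, hXs, hX⟩ := h
  obtain ⟨G, hG, hGX⟩ := hX s hXs
  exact ⟨G, hG, fun a ha t ht => ⟨X, (hGX a ha t ht).2, hX⟩⟩

theorem exists_knows (h : triSem M P s) : ∃ a : Agt, ∀ t, M.rel a s t → triSem M P t := by
  obtain ⟨G, hG, hGK⟩ := h.exists_group_knows
  obtain ⟨a, ha⟩ : G.Nonempty := by rw [← Finset.card_pos, hG]; omega
  exact ⟨a, hGK a ha⟩

theorem exists_ne_knows (h : triSem M P s) (c : Agt) :
    ∃ b, b ≠ c ∧ ∀ t, M.rel b s t → triSem M P t := by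
  obtain ⟨G, hG, hGK⟩ := h.exists_group_knows
  obtain ⟨b, hb, hbc⟩ := Finset.exists_mem_ne (by omega : 1 < G.card) c
  exact ⟨b, hbc, hGK b hb⟩

end triSem

section SafeUpdate

variable {Agt St : Type} {M : Model Agt St}

theorem bisim_updSafe_restrict (hM : isEquivModel M) (φ : Form Agt) :
    Bisim (updSafe M φ) (restrict M (fun t => Sat M t (.tri φ)))
      (fun p t => p.1 = t ∧ Sat M p.1 (.K p.2 (.tri φ))) where
  atoms := by
    rintro p t ⟨rfl, -⟩ n
    exact Iff.rfl
  forth := by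
    rintro p t ⟨rfl, hK⟩ c u ⟨-, hu, hrel, -⟩
    exact ⟨u.1, ⟨hK p.1 ((hM p.2).refl p.1), hu u.1 ((hM u.2).refl u.1), hrel⟩, rfl, hu⟩
  back := by
    rintro p t ⟨rfl, hK⟩ c v ⟨-, hv, hrel⟩
    by_cases hpc : p.2 = c
    · subst hpc
      have hKv : Sat M v (.K p.2 (.tri φ)) := fun w hw => hK w ((hM p.2).trans hrel hw)
      exact ⟨(v, p.2), ⟨hK, hKv, hrel, Iff.rfl⟩, rfl, hKv⟩
    · obtain ⟨b, hbc, hKv⟩ := triSem.exists_ne_knows hv c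
      exact ⟨(v, b), ⟨hK, hKv, hrel, iff_of_false hpc hbc⟩, rfl, hKv⟩

theorem sat_annS_iff (hM : isEquivModel M) (s : St) (φ ψ : Form Agt) :
    Sat M s (.annS φ ψ) ↔
      (Sat M s (.tri φ) → Sat (restrict M (fun t => Sat M t (.tri φ))) s ψ) := by
  have hZ := bisim_updSafe_restrict hM φ
  constructor
  · intro h htri
    obtain ⟨a, ha⟩ := triSem.exists_knows htri
    exact (sat_iff_of_bisim ψ hZ (s := (s, a)) ⟨rfl, ha⟩).mp (h a ha)
  · intro h a ha
    exact (sat_iff_of_bisim ψ hZ (s := (s, a)) ⟨rfl, ha⟩).mpr (h (ha s ((hM a).refl s)))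

end SafeUpdate

theorem stmt6 {Agt St : Type}
    (M : Model Agt St) (hM : isEquivModel M) (s : St) (φ ψ : Form Agt) :
    (Sat M s (.annS φ ψ) ↔
      (Sat M s (.tri φ) → Sat (restrict M (fun t => Sat M t (.tri φ))) s ψ)) ∧
    (∀ a : Agt, Sat M s (.K a (.tri φ)) →
      (Bisim (updSafe M φ) (restrict M (fun t => Sat M t (.tri φ)))
        (fun p t => p.1 = t ∧ Sat M p.1 (.K p.2 (.tri φ))) ∧
       ((s, a).1 = s ∧ Sat M (s, a).1 (.K (s, a).2 (.tri φ))))) :=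
  ⟨sat_annS_iff hM s φ ψ, fun _ ha => ⟨bisim_updSafe_restrict hM φ, rfl, ha⟩⟩
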